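/- Let v be a vertex of a tree T of order n ≥ 3 minimizing ww_T, and T_i a component of T − v of order n_i. If Σ_{x∈V(T_i)} d_T(v,x) ≥ n_i, then n_i ≤ (1/2)·Σ_{y∈V(T)∖V(T_i)} d_T(v,y) + n/2. -/

import Mathlib

open Finset
open scoped Classical

/-- Local hyper-Wiener function: `ww G v = Σ_u (d(u,v)² + d(u,v))`. -/
noncomputable def ww {V : Type*} [Fintype V] (G : SimpleGraph V) (v : V) : ℕ :=
  ∑ u : V, ((G.dist u v) ^ 2 + G.dist u v)

/-!
Passing from `v` to a neighbour `w` brings every vertex of the branch `B` of `T - v` at `w`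
one step closer and moves every other vertex one step away. Since
`(d + 1)² + (d + 1) - (d² + d) = 2 (d + 1)`, minimality of `ww` at `v` yields
`∑_{x ∈ B} d(v, x) ≤ ∑_{y ∉ B} (d(v, y) + 1)`, and each term on the left is at least `1`.
-/

namespace SimpleGraph

variable {V : Type*} {G : SimpleGraph V} {u v w x : V}

lemma not_adj_deleteEdges_incidenceSet (y : V) :
    ¬ (G.deleteEdges (G.incidenceSet v)).Adj v y := fun h =>
  (deleteEdges_adj.mp h).2 ((G.mem_incidenceSet v y).mpr (deleteEdges_adj.mp h).1)

lemma Walk.notMem_support_of_deleteEdges_incidenceSet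
    (p : (G.deleteEdges (G.incidenceSet v)).Walk u x) (hu : u ≠ v) : v ∉ p.support := by
  intro hv
  rcases (p.takeUntil v hv).reverse with _ | ⟨hadj, _⟩
  · exact hu rfl
  · exact not_adj_deleteEdges_incidenceSet _ hadj

lemma Walk.reachable_deleteEdges_incidenceSet (p : G.Walk u x) (hv : v ∉ p.support) :
    (G.deleteEdges (G.incidenceSet v)).Reachable u x :=
  ⟨p.toDeleteEdges _ fun e he hev => hv <| by
    rw [← Sym2.other_spec hev.2] at he
    exact p.fst_mem_support_of_mem_edges he⟩

lemma IsAcyclic.length_eq_dist_of_isPath (hG : G.IsAcyclic) {p : G.Walk u x} (hp : p.IsPath) :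
    p.length = G.dist u x := by
  obtain ⟨q, hq, hqd⟩ := p.reachable.exists_path_of_dist
  have hpq : (⟨p, hp⟩ : G.Path u x) = ⟨q, hq⟩ := (hG.subsingleton_path u x).elim _ _
  obtain rfl : p = q := congrArg Subtype.val hpq
  exact hqd

lemma IsAcyclic.dist_eq_dist_add_one_of_reachable_deleteEdges (hG : G.IsAcyclic)
    (hvw : G.Adj v w) (hx : (G.deleteEdges (G.incidenceSet v)).Reachable w x) :
    G.dist v x = G.dist w x + 1 := by
  obtain ⟨q, hq, -⟩ := hx.exists_path_of_dist
  let q' : G.Walk w x := q.mapLe (deleteEdges_le _)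
  have hq' : q'.IsPath := (Walk.isPath_mapLe _).mpr hq
  have hv : v ∉ q'.support := by
    rw [Walk.support_mapLe_eq_support]
    exact q.notMem_support_of_deleteEdges_incidenceSet hvw.ne'
  rw [← hG.length_eq_dist_of_isPath ((Walk.cons_isPath_iff hvw q').mpr ⟨hq', hv⟩),
    ← hG.length_eq_dist_of_isPath hq', Walk.length_cons]

lemma dist_eq_dist_add_one_of_not_reachable_deleteEdges (hvw : G.Adj v w)
    (hwx : G.Reachable w x) (hx : ¬ (G.deleteEdges (G.incidenceSet v)).Reachable w x) :
    G.dist w x = G.dist v x + 1 := by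
  obtain ⟨p, hp⟩ := hwx.exists_walk_length_eq_dist
  have hv : v ∈ p.support := by_contra fun h => hx (p.reachable_deleteEdges_incidenceSet h)
  have htake : (p.takeUntil v hv).length ≠ 0 := fun h => hvw.ne' (Walk.eq_of_length_eq_zero h)
  have hdrop : G.dist v x ≤ (p.dropUntil v hv).length := dist_le _
  have hsplit := congrArg Walk.length (p.take_spec hv)
  have hupper := hvw.symm.reachable.dist_triangle_left x
  rw [Walk.length_append] at hsplit
  rw [dist_eq_one_iff_adj.mpr hvw.symm] at hupper
  omega

variable [Fintype V]

lemma ww_eq_sum (v : V) : ww G v = ∑ x, (G.dist v x ^ 2 + G.dist v x) :=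
  sum_congr rfl fun x _ => by rw [dist_comm]

noncomputable def branch (G : SimpleGraph V) (v w : V) : Finset V :=
  univ.filter fun x => (G.deleteEdges (G.incidenceSet v)).Reachable w x

@[simp]
lemma mem_branch : x ∈ G.branch v w ↔ (G.deleteEdges (G.incidenceSet v)).Reachable w x := by
  simp [branch]

lemma IsTree.ww_add_sum_dist_branch (hG : G.IsTree) (hvw : G.Adj v w) :
    ww G w + 2 * ∑ x ∈ G.branch v w, G.dist v x
      = ww G v + 2 * ∑ x ∈ (G.branch v w)ᶜ, G.dist w x := by
  have hin : ∀ x ∈ G.branch v w, G.dist v x = G.dist w x + 1 := fun x hx =>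
    hG.isAcyclic.dist_eq_dist_add_one_of_reachable_deleteEdges hvw (mem_branch.mp hx)
  have hout : ∀ x ∈ (G.branch v w)ᶜ, G.dist w x = G.dist v x + 1 := fun x hx =>
    dist_eq_dist_add_one_of_not_reachable_deleteEdges hvw (hG.connected w x)
      (by simpa using hx)
  calc ww G w + 2 * ∑ x ∈ G.branch v w, G.dist v x
      = ∑ x ∈ G.branch v w, (G.dist w x ^ 2 + G.dist w x + 2 * G.dist v x)
        + ∑ x ∈ (G.branch v w)ᶜ, (G.dist w x ^ 2 + G.dist w x) := by
        rw [ww_eq_sum, ← sum_add_sum_compl (G.branch v w), mul_sum]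
        simp only [sum_add_distrib]; ring
    _ = ∑ x ∈ G.branch v w, (G.dist v x ^ 2 + G.dist v x)
        + ∑ x ∈ (G.branch v w)ᶜ, (G.dist v x ^ 2 + G.dist v x + 2 * G.dist w x) := by
        congr 1 <;> refine sum_congr rfl fun x hx => ?_
        · rw [hin x hx]; ring
        · rw [hout x hx]; ring
    _ = ww G v + 2 * ∑ x ∈ (G.branch v w)ᶜ, G.dist w x := by
        rw [ww_eq_sum, ← sum_add_sum_compl (G.branch v w), mul_sum]
        simp only [sum_add_distrib]; ring

lemma IsTree.sum_dist_branch_le (hG : G.IsTree) (hvw : G.Adj v w) (hmin : ww G v ≤ ww G w) :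
    ∑ x ∈ G.branch v w, G.dist v x
      ≤ ∑ x ∈ (G.branch v w)ᶜ, G.dist v x + #(G.branch v w)ᶜ := by
  have hsum_compl : ∑ x ∈ (G.branch v w)ᶜ, G.dist w x
      = ∑ x ∈ (G.branch v w)ᶜ, G.dist v x + #(G.branch v w)ᶜ := by
    rw [card_eq_sum_ones, ← sum_add_distrib]
    exact sum_congr rfl fun x hx =>
      dist_eq_dist_add_one_of_not_reachable_deleteEdges hvw (hG.connected w x)
        (by simpa using hx)
  have := hG.ww_add_sum_dist_branch hvw
  omega

lemma IsAcyclic.card_branch_le_sum_dist (hG : G.IsAcyclic) (hvw : G.Adj v w) :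
    #(G.branch v w) ≤ ∑ x ∈ G.branch v w, G.dist v x := by
  rw [card_eq_sum_ones]
  exact sum_le_sum fun x hx => by
    rw [hG.dist_eq_dist_add_one_of_reachable_deleteEdges hvw (mem_branch.mp hx)]
    exact Nat.le_add_left 1 _

end SimpleGraph

open SimpleGraph

theorem stmt13_general {V : Type*} [Fintype V] (T : SimpleGraph V) (hT : T.IsTree)
    (v : V) (hv : ∀ x, ww T v ≤ ww T x)
    (vi : V) (hvi : T.Adj v vi) :
    ((Finset.univ.filter
        (fun x => (T.deleteEdges (T.incidenceSet v)).Reachable vi x)).card : ℚ)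
      ≤ ((∑ y ∈ (Finset.univ.filter
            (fun y => (T.deleteEdges (T.incidenceSet v)).Reachable vi y))ᶜ,
            T.dist v y : ℕ) : ℚ) / 2
        + (Fintype.card V : ℚ) / 2 := by
  change (#(T.branch v vi) : ℚ) ≤ ((∑ y ∈ (T.branch v vi)ᶜ, T.dist v y : ℕ) : ℚ) / 2 + _
  have hbranch := hT.sum_dist_branch_le hvi (hv vi)
  have hcard := hT.isAcyclic.card_branch_le_sum_dist hvi
  have hsplit := card_add_card_compl (T.branch v vi)
  rw [← add_div, le_div_iff₀ two_pos]
  exact_mod_cast (by omega :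
    #(T.branch v vi) * 2 ≤ ∑ y ∈ (T.branch v vi)ᶜ, T.dist v y + Fintype.card V)

theorem stmt13 {V : Type*} [Fintype V] (T : SimpleGraph V) (hT : T.IsTree)
    (hn : 3 ≤ Fintype.card V) (v : V) (hv : ∀ x, ww T v ≤ ww T x)
    (vi : V) (hvi : T.Adj v vi)
    (hsum : (Finset.univ.filter
        (fun x => (T.deleteEdges (T.incidenceSet v)).Reachable vi x)).card
      ≤ ∑ x ∈ Finset.univ.filter
          (fun x => (T.deleteEdges (T.incidenceSet v)).Reachable vi x), T.dist v x) :
    ((Finset.univ.filter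
        (fun x => (T.deleteEdges (T.incidenceSet v)).Reachable vi x)).card : ℚ)
      ≤ ((∑ y ∈ (Finset.univ.filter
            (fun y => (T.deleteEdges (T.incidenceSet v)).Reachable vi y))ᶜ,
            T.dist v y : ℕ) : ℚ) / 2
        + (Fintype.card V : ℚ) / 2 :=
  stmt13_general T hT v hv vi hvi
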